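/- For every r ∈ ℝ³, the trace of the rotation matrix R_r = exp([r]ₓ) equals 1 + 2 cos ‖r‖; equivalently, (trace(R_r) − 1)/2 = cos ‖r‖, so that for ‖r‖ ≤ π the rotation angle ‖r‖ is recovered as arccos((trace(R_r) − 1)/2). -/

import Mathlib

open Matrix Real

/-- The skew-symmetric cross-product matrix of a vector `r ∈ ℝ³`. -/
noncomputable def crossMat (r : EuclideanSpace ℝ (Fin 3)) : Matrix (Fin 3) (Fin 3) ℝ :=
  !![0, -r 2, r 1; r 2, 0, -r 0; -r 1, r 0, 0]

/-- The rotation matrix `R_r = exp([r]ₓ)` of an angle-axis vector `r ∈ ℝ³`. -/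
noncomputable def rotOf (r : EuclideanSpace ℝ (Fin 3)) : Matrix (Fin 3) (Fin 3) ℝ :=
  NormedSpace.exp (crossMat r)

/-!
The cross-product matrix `K = [r]ₓ` satisfies `K³ = -‖r‖² K`, `tr K = 0` and `tr K² = -2‖r‖²`
(its eigenvalues are `0, ±i‖r‖`). Hence the odd powers of `K` are traceless and
`tr K^(2k) = 2 (-1)^k ‖r‖^(2k)` for `k ≥ 1`, so taking the trace of the exponential series term by
term leaves `1 + 2` times the cosine series of `‖r‖`.
-/

section PowThree

variable {S R : Type*} [CommSemiring S] [Semiring R] [Algebra S R] {a : R} {c : S}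

theorem pow_two_mul_add_one_of_pow_three (h : a ^ 3 = c • a) (k : ℕ) :
    a ^ (2 * k + 1) = c ^ k • a := by
  induction k with
  | zero => simp
  | succ k ih =>
    rw [show 2 * (k + 1) + 1 = 2 * k + 1 + 2 by ring, pow_add, ih, smul_mul_assoc, ← pow_succ',
      h, smul_smul, ← pow_succ]

theorem pow_two_mul_add_two_of_pow_three (h : a ^ 3 = c • a) (k : ℕ) :
    a ^ (2 * k + 2) = c ^ k • a ^ 2 := by
  rw [pow_succ, pow_two_mul_add_one_of_pow_three h, smul_mul_assoc, ← pow_two]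

end PowThree

namespace Matrix

open Nat

variable {n : Type*} [Fintype n] [DecidableEq n]

section
-- `NormedSpace.exp` does not depend on a norm; any normed-algebra structure unlocks its series.
attribute [local instance] Matrix.linftyOpNormedRing Matrix.linftyOpNormedAlgebra

theorem hasSum_trace_exp {𝕂 : Type*} [RCLike 𝕂] (A : Matrix n n 𝕂) :
    HasSum (fun k => (k !⁻¹ : 𝕂) * (A ^ k).trace) (NormedSpace.exp A).trace := by
  have := (NormedSpace.exp_series_hasSum_exp' (𝕂 := 𝕂) A).mapL
    (traceLinearMap n 𝕂 𝕂).toContinuousLinearMap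
  simp only [LinearMap.coe_toContinuousLinearMap', traceLinearMap_apply, trace_smul,
    smul_eq_mul] at this
  exact this

end

theorem trace_pow_two_mul_of_pow_three {A : Matrix n n ℝ} {θ : ℝ} (h3 : A ^ 3 = -θ ^ 2 • A)
    (h2 : (A ^ 2).trace = -2 * θ ^ 2) (k : ℕ) :
    (A ^ (2 * k)).trace =
      2 * ((-1) ^ k * θ ^ (2 * k)) + if k = 0 then (Fintype.card n - 2 : ℝ) else 0 := by
  cases k with
  | zero => simp
  | succ k =>
    rw [mul_add_one, pow_two_mul_add_two_of_pow_three h3, trace_smul, h2, smul_eq_mul,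
      if_neg k.succ_ne_zero]
    ring

theorem trace_exp_of_pow_three {A : Matrix n n ℝ} {θ : ℝ} (h3 : A ^ 3 = -θ ^ 2 • A)
    (h1 : A.trace = 0) (h2 : (A ^ 2).trace = -2 * θ ^ 2) :
    (NormedSpace.exp A).trace = Fintype.card n - 2 + 2 * cos θ := by
  have hodd : HasSum (fun k : ℕ => ((2 * k + 1)! : ℝ)⁻¹ * (A ^ (2 * k + 1)).trace) 0 := by
    simpa only [pow_two_mul_add_one_of_pow_three h3, trace_smul, h1, smul_zero, mul_zero]
      using hasSum_zero
  have heven : HasSum (fun k : ℕ => ((2 * k)! : ℝ)⁻¹ * (A ^ (2 * k)).trace)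
      (2 * cos θ + (Fintype.card n - 2)) := by
    have := ((hasSum_cos θ).mul_left 2).add (hasSum_ite_eq 0 (Fintype.card n - 2 : ℝ))
    refine this.congr_fun fun k => ?_
    rw [trace_pow_two_mul_of_pow_three h3 h2]
    rcases k with _ | k
    · simp
    · simp only [Nat.add_one_ne_zero, if_false]
      ring
  rw [(hasSum_trace_exp A).unique
    (HasSum.even_add_odd (f := fun k => (k ! : ℝ)⁻¹ * (A ^ k).trace) heven hodd)]
  ring

end Matrix

theorem crossMat_pow_three (r : EuclideanSpace ℝ (Fin 3)) :
    crossMat r ^ 3 = -‖r‖ ^ 2 • crossMat r := by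
  rw [EuclideanSpace.real_norm_sq_eq, Fin.sum_univ_three]
  ext i j
  fin_cases i <;> fin_cases j <;>
    simp [crossMat, pow_succ, mul_apply, Fin.sum_univ_three] <;> ring

theorem trace_crossMat (r : EuclideanSpace ℝ (Fin 3)) : (crossMat r).trace = 0 := by
  simp [crossMat, trace_fin_three]

theorem trace_crossMat_sq (r : EuclideanSpace ℝ (Fin 3)) :
    (crossMat r ^ 2).trace = -2 * ‖r‖ ^ 2 := by
  rw [EuclideanSpace.real_norm_sq_eq, Fin.sum_univ_three]
  simp [crossMat, pow_two, trace_fin_three]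
  ring

theorem trace_rotOf (r : EuclideanSpace ℝ (Fin 3)) :
    (rotOf r).trace = 1 + 2 * Real.cos ‖r‖ ∧
    ((rotOf r).trace - 1) / 2 = Real.cos ‖r‖ ∧
    (‖r‖ ≤ Real.pi → Real.arccos (((rotOf r).trace - 1) / 2) = ‖r‖) := by
  have htrace : (rotOf r).trace = 1 + 2 * cos ‖r‖ := by
    rw [rotOf, trace_exp_of_pow_three (crossMat_pow_three r) (trace_crossMat r)
      (trace_crossMat_sq r)]
    norm_num
  have hcos : ((rotOf r).trace - 1) / 2 = cos ‖r‖ := by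
    rw [htrace]
    ring
  exact ⟨htrace, hcos, fun hle => hcos ▸ arccos_cos (norm_nonneg r) hle⟩
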